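/- arXiv:0705.3391 — 4 statements merged into one kernel-verified Lean document; each statement's English description precedes it below -/
import Mathlib

section
/- Let A and B be self-adjoint operators on a finite-dimensional complex inner product space with [B, BA²B] = 0, and let e be a vector that is an eigenvector of ABA with eigenvalue w and an eigenvector of AB²A with eigenvalue v. Then w · B(BA e) = v · BA e. Consequently, if BA e ≠ 0, then w ≠ 0 and BA e is an eigenvector of B with eigenvalue v/w. -/
/-!
Write `C = B A² B`. If `e` is a joint eigenvector of `ABA` (eigenvalue `w`) and `AB²A`
(eigenvalue `v`), then `C (A e) = w • B A e` and `C (B A e) = v • B A e`, so applying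
`B C = C B` to `A e` gives `w • B (B A e) = v • B A e`. Since `AB²A = (BA)† (BA)` has the
same kernel as `BA`, the vector `B A e` vanishes as soon as `v` does; hence `B A e ≠ 0`
forces `v ≠ 0` and then `w ≠ 0`.
-/

section Commutation

variable {R M : Type*} [CommSemiring R] [AddCommMonoid M] [Module R M]

theorem Module.End.smul_apply_mul_apply_eq_of_commute_mul_sq_mul {A B : Module.End R M}
    (hcomm : B * (B * A ^ 2 * B) = (B * A ^ 2 * B) * B) {e : M} {w v : R}
    (hw : (A * B * A) e = w • e) (hv : (A * B ^ 2 * A) e = v • e) :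
    w • B (B (A e)) = v • B (A e) := by
  have hCA : (B * A ^ 2 * B) (A e) = w • B (A e) := by
    rw [← map_smul, ← map_smul, ← hw]
    simp only [Module.End.mul_apply, pow_two]
  have hCBA : (B * A ^ 2 * B) (B (A e)) = v • B (A e) := by
    rw [← map_smul, ← map_smul, ← hv]
    simp only [Module.End.mul_apply, pow_two]
  have := congrArg (fun T : Module.End R M => T (A e)) hcomm
  simpa only [Module.End.mul_apply, hCA, hCBA, map_smul] using this

end Commutation

section SelfAdjoint

variable {𝕜 E : Type*} [RCLike 𝕜] [NormedAddCommGroup E] [InnerProductSpace 𝕜 E]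
  [FiniteDimensional 𝕜 E]

theorem LinearMap.adjoint_mul_self_mul_of_isSelfAdjoint {A B : E →ₗ[𝕜] E}
    (hA : IsSelfAdjoint A) (hB : IsSelfAdjoint B) :
    (B * A).adjoint * (B * A) = A * B ^ 2 * A := by
  rw [← LinearMap.star_eq_adjoint, star_mul, hA.star_eq, hB.star_eq]
  noncomm_ring

theorem LinearMap.mul_sq_mul_apply_eq_zero_iff {A B : E →ₗ[𝕜] E}
    (hA : IsSelfAdjoint A) (hB : IsSelfAdjoint B) {e : E} :
    (A * B ^ 2 * A) e = 0 ↔ B (A e) = 0 := by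
  rw [← LinearMap.adjoint_mul_self_mul_of_isSelfAdjoint hA hB, ← LinearMap.mem_ker,
    Module.End.mul_eq_comp, LinearMap.ker_adjoint_comp_self]
  rfl

end SelfAdjoint

variable {H : Type*} [NormedAddCommGroup H] [InnerProductSpace ℂ H] [FiniteDimensional ℂ H]

theorem BAe_eigenvector_of_B_general (A B : H →ₗ[ℂ] H)
    (hA : IsSelfAdjoint A) (hB : IsSelfAdjoint B)
    (hcomm : B * (B * A ^ 2 * B) = (B * A ^ 2 * B) * B)
    (e : H) (w v : ℂ)
    (hw : (A * B * A) e = w • e) (hv : (A * B ^ 2 * A) e = v • e) :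
    w • B (B (A e)) = v • B (A e) ∧
      (B (A e) ≠ 0 → w ≠ 0 ∧ B (B (A e)) = (v / w) • B (A e)) := by
  have key := Module.End.smul_apply_mul_apply_eq_of_commute_mul_sq_mul hcomm hw hv
  refine ⟨key, fun hBAe => ?_⟩
  have hv0 : v ≠ 0 := by
    rintro rfl
    rw [zero_smul, LinearMap.mul_sq_mul_apply_eq_zero_iff hA hB] at hv
    exact hBAe hv
  have hw0 : w ≠ 0 := by
    rintro rfl
    rw [zero_smul, eq_comm, smul_eq_zero_iff_right hv0] at key
    exact hBAe key
  refine ⟨hw0, ?_⟩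
  rw [div_eq_inv_mul, mul_smul, ← key, inv_smul_smul₀ hw0]

/-- If `[B, BA²B] = 0` and `e ≠ 0` is an eigenvector of `ABA` with eigenvalue `w` and of
`AB²A` with eigenvalue `v`, then `w • B (B (A e)) = v • B (A e)`; consequently, if
`B (A e) ≠ 0` then `w ≠ 0` and `B (A e)` is an eigenvector of `B` with eigenvalue `v / w`. -/
theorem BAe_eigenvector_of_B (A B : H →ₗ[ℂ] H)
    (hA : IsSelfAdjoint A) (hB : IsSelfAdjoint B)
    (hcomm : B * (B * A ^ 2 * B) = (B * A ^ 2 * B) * B)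
    (e : H) (he : e ≠ 0) (w v : ℂ)
    (hw : (A * B * A) e = w • e) (hv : (A * B ^ 2 * A) e = v • e) :
    w • B (B (A e)) = v • B (A e) ∧
      (B (A e) ≠ 0 → w ≠ 0 ∧ B (B (A e)) = (v / w) • B (A e)) :=
  BAe_eigenvector_of_B_general A B hA hB hcomm e w v hw hv
end

section
/- Let γ1 and γ2 be positive semidefinite operators on a finite-dimensional complex inner product space H, and let {Π_k} be a common block-diagonal structure (CBS) of γ1 and γ2, i.e., a finite family of pairwise orthogonal self-adjoint projections summing to the identity such that every Π_k commutes with γ1 and with γ2. Let P0 be the orthogonal projection onto ker γ1 + ker γ2. Then every Π_k commutes with P0, and consequently every Π_k commutes with the reduced operators γ_μ⁰ = P0 γ_μ P0 for μ = 1, 2. In other words, the reduction τ0 of unambiguous state discrimination preserves any CBS. -/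
variable {H : Type*} [NormedAddCommGroup H] [InnerProductSpace ℂ H] [FiniteDimensional ℂ H]

/-- A positive semidefinite operator: self-adjoint with nonnegative quadratic form. -/
def IsPosSemidef (S : H →ₗ[ℂ] H) : Prop :=
  IsSelfAdjoint S ∧ ∀ x : H, 0 ≤ (inner ℂ x (S x) : ℂ).re

/-! `P k` commutes with `γ1` and `γ2`, so it leaves `ker γ1 + ker γ2 = range P0` invariant.
A self-adjoint operator leaving the range of an orthogonal projection invariant also leaves its
orthogonal complement invariant, hence commutes with the projection. -/

open LinearMap Module.End

lemma Module.End.ker_mem_invtSubmodule_of_commute {R M : Type*} [Semiring R] [AddCommMonoid M]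
    [Module R M] {S T : Module.End R M} (h : Commute T S) : ker S ∈ invtSubmodule T := by
  refine (mem_invtSubmodule_iff_forall_mem_of_mem T).mpr fun x hx => ?_
  rw [mem_ker] at hx ⊢
  rw [← mul_apply, ← h.eq, mul_apply, hx, map_zero]

lemma IsStarProjection.commute_of_mul_mul_self_eq {R : Type*} [Semigroup R] [StarMul R]
    {p a : R} (hp : IsStarProjection p) (ha : IsSelfAdjoint a) (h : p * a * p = a * p) :
    Commute a p := by
  have h' : p * a * p = p * a := by
    simpa only [star_mul, hp.isSelfAdjoint.star_eq, ha.star_eq, mul_assoc] using congrArg star h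
  exact h.symm.trans h'

lemma IsStarProjection.commute_of_range_mem_invtSubmodule {𝕜 E : Type*} [RCLike 𝕜]
    [NormedAddCommGroup E] [InnerProductSpace 𝕜 E] [FiniteDimensional 𝕜 E] {p T : E →ₗ[𝕜] E}
    (hp : IsStarProjection p) (hT : IsSelfAdjoint T) (h : range p ∈ invtSubmodule T) :
    Commute T p :=
  hp.commute_of_mul_mul_self_eq hT (hp.isIdempotentElem.range_mem_invtSubmodule_iff.mp h)

theorem tau0_preserves_cbs_general (γ1 γ2 : H →ₗ[ℂ] H)
    (m : ℕ) (P : Fin m → H →ₗ[ℂ] H)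
    (hsa : ∀ k, IsSelfAdjoint (P k))
    (hc1 : ∀ k, Commute (P k) γ1) (hc2 : ∀ k, Commute (P k) γ2)
    (P0 : H →ₗ[ℂ] H) (hP0sa : IsSelfAdjoint P0) (hP0idem : P0 * P0 = P0)
    (hP0range : LinearMap.range P0 = LinearMap.ker γ1 ⊔ LinearMap.ker γ2) :
    ∀ k, Commute (P k) P0 ∧
      Commute (P k) (P0 * γ1 * P0) ∧ Commute (P k) (P0 * γ2 * P0) := by
  intro k
  have hinv : range P0 ∈ invtSubmodule (P k) := hP0range ▸
    invtSubmodule.sup_mem (ker_mem_invtSubmodule_of_commute (hc1 k))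
      (ker_mem_invtSubmodule_of_commute (hc2 k))
  have hcomm : Commute (P k) P0 :=
    IsStarProjection.commute_of_range_mem_invtSubmodule ⟨hP0idem, hP0sa⟩ (hsa k) hinv
  exact ⟨hcomm, (hcomm.mul_right (hc1 k)).mul_right hcomm,
    (hcomm.mul_right (hc2 k)).mul_right hcomm⟩

/-- The reduction `τ0` of unambiguous state discrimination preserves any common
block-diagonal structure: if `{P k}` is a CBS of the positive semidefinite operators
`γ1` and `γ2` and `P0` is the orthogonal projection onto `ker γ1 + ker γ2`, then every
`P k` commutes with `P0` and with the reduced operators `P0 * γμ * P0`. -/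
theorem tau0_preserves_cbs (γ1 γ2 : H →ₗ[ℂ] H)
    (h1 : IsPosSemidef γ1) (h2 : IsPosSemidef γ2)
    (m : ℕ) (P : Fin m → H →ₗ[ℂ] H)
    (hsa : ∀ k, IsSelfAdjoint (P k))
    (hidem : ∀ k, P k * P k = P k)
    (horth : ∀ k l, k ≠ l → P k * P l = 0)
    (hsum : ∑ k, P k = 1)
    (hc1 : ∀ k, Commute (P k) γ1) (hc2 : ∀ k, Commute (P k) γ2)
    (P0 : H →ₗ[ℂ] H) (hP0sa : IsSelfAdjoint P0) (hP0idem : P0 * P0 = P0)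
    (hP0range : LinearMap.range P0 = LinearMap.ker γ1 ⊔ LinearMap.ker γ2) :
    ∀ k, Commute (P k) P0 ∧
      Commute (P k) (P0 * γ1 * P0) ∧ Commute (P k) (P0 * γ2 * P0) :=
  tau0_preserves_cbs_general γ1 γ2 m P hsa hc1 hc2 P0 hP0sa hP0idem hP0range
end

section
/- Let N ≥ 2 and let ψ_1, …, ψ_N be unit vectors in ℂ^d with ⟨ψ_i, ψ_j⟩ = c for all i ≠ j, where c is real with 0 < c < 1. With P_k = ψ_k ψ_k† and γ1 = N⁻² Σ_k P_k ⊗ P_k, γ2 = N⁻² Σ_{k≠l} P_k ⊗ P_l (Kronecker products), the supports of γ1 and γ2 intersect trivially: range γ1 ∩ range γ2 = {0}. -/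
/-
The vectors `ψ k` are linearly independent, because their Gram matrix `(1 - c) I + c J` has
eigenvalues `1 - c` and `1 - c + N c`, both nonzero; hence so are the product vectors
`ψ k ⊗ ψ l`. Each `P k ⊗ P l` maps into the line spanned by `ψ k ⊗ ψ l`, so the range of `γ1`
lies in the span of the diagonal products and the range of `γ2` in the span of the
off-diagonal ones, and these spans meet only in `0`.
-/

open Matrix Kronecker

/-- The rank-one projection `ψ ψ†` onto the span of the unit vector `ψ k`. -/
noncomputable def projOf {d N : ℕ} (ψ : Fin N → Fin d → ℂ) (k : Fin N) :
    Matrix (Fin d) (Fin d) ℂ :=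
  Matrix.vecMulVec (ψ k) (star (ψ k))

/-- `γ1 = N⁻² ∑ k, P k ⊗ P k`, describing a pair of identical states. -/
noncomputable def gammaOne {d N : ℕ} (ψ : Fin N → Fin d → ℂ) :
    Matrix (Fin d × Fin d) (Fin d × Fin d) ℂ :=
  ((N : ℂ) ^ 2)⁻¹ • ∑ k, projOf ψ k ⊗ₖ projOf ψ k

/-- `γ2 = N⁻² ∑ k ≠ l, P k ⊗ P l`, describing a pair of distinct states. -/
noncomputable def gammaTwo {d N : ℕ} (ψ : Fin N → Fin d → ℂ) :
    Matrix (Fin d × Fin d) (Fin d × Fin d) ℂ :=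
  ((N : ℂ) ^ 2)⁻¹ • ∑ p ∈ Finset.univ.filter (fun p : Fin N × Fin N => p.1 ≠ p.2),
    projOf ψ p.1 ⊗ₖ projOf ψ p.2

open scoped TensorProduct

def kroneckerVec {R m n : Type*} [Mul R] (u : m → R) (v : n → R) : m × n → R :=
  fun p => u p.1 * v p.2

section

variable {R m n ι κ : Type*}

theorem LinearIndependent.kroneckerVec [CommRing R] [IsDomain R] [Fintype n] [DecidableEq n]
    {u : ι → m → R} {v : κ → n → R} (hu : LinearIndependent R u) (hv : LinearIndependent R v) :
    LinearIndependent R fun p : ι × κ => _root_.kroneckerVec (u p.1) (v p.2) := by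
  let e : (m → R) ⊗[R] (n → R) ≃ₗ[R] (m × n → R) :=
    TensorProduct.piScalarRight R R (m → R) n ≪≫ₗ (LinearEquiv.curry R R n m).symm ≪≫ₗ
      LinearEquiv.funCongrLeft R R (Equiv.prodComm m n)
  have he (x : m → R) (y : n → R) : e (x ⊗ₜ y) = _root_.kroneckerVec x y := by
    ext ⟨i, j⟩
    simp [e, _root_.kroneckerVec, TensorProduct.piScalarRight_apply, mul_comm]
  simpa only [Function.comp_def, LinearEquiv.coe_coe, he] using
    (hu.tmul_of_isDomain hv).map' e.toLinearMap e.ker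

theorem vecMulVec_kronecker_vecMulVec [CommSemiring R] (u : m → R) (v : n → R)
    (u' : ι → R) (v' : κ → R) :
    vecMulVec u v ⊗ₖ vecMulVec u' v' = vecMulVec (kroneckerVec u u') (kroneckerVec v v') := by
  ext ⟨i, i'⟩ ⟨j, j'⟩
  simp only [kroneckerMap_apply, vecMulVec_apply, kroneckerVec]
  ring

theorem range_mulVecLin_sum_vecMulVec_le [CommSemiring R] [Fintype n] (s : Finset ι)
    (u : ι → m → R) (v : ι → n → R) :
    LinearMap.range (∑ i ∈ s, vecMulVec (u i) (v i)).mulVecLin ≤ Submodule.span R (u '' s) := by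
  rintro _ ⟨x, rfl⟩
  rw [mulVecLin_apply, sum_mulVec]
  refine Submodule.sum_mem _ fun i hi => ?_
  rw [vecMulVec_mulVec, op_smul_eq_smul]
  exact Submodule.smul_mem _ _ (Submodule.subset_span (Set.mem_image_of_mem u hi))

theorem range_mulVecLin_smul_le [CommSemiring R] [Fintype n] (a : R) (M : Matrix m n R) :
    LinearMap.range (a • M).mulVecLin ≤ LinearMap.range M.mulVecLin := by
  rintro _ ⟨x, rfl⟩
  exact ⟨a • x, by simp⟩

theorem linearIndependent_of_equiangular [Fintype ι] [Fintype n]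
    {ψ : ι → n → ℂ} {c : ℝ} (hc0 : 0 ≤ c) (hc1 : c < 1)
    (hnorm : ∀ k, star (ψ k) ⬝ᵥ ψ k = 1)
    (hoverlap : ∀ i j, i ≠ j → star (ψ i) ⬝ᵥ ψ j = c) :
    LinearIndependent ℂ ψ := by
  classical
  rw [Fintype.linearIndependent_iff]
  intro g hg
  set S := ∑ i, g i
  have hgram (j i : ι) : star (ψ j) ⬝ᵥ ψ i = c + if j = i then 1 - (c : ℂ) else 0 := by
    split_ifs with h
    · rw [h, hnorm]; ring
    · rw [hoverlap j i h, add_zero]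
  have hrow (j : ι) : (1 - (c : ℂ)) * g j + c * S = 0 := by
    have h := congrArg (star (ψ j) ⬝ᵥ ·) hg
    simp only [dotProduct_sum, dotProduct_smul, dotProduct_zero, smul_eq_mul, hgram, mul_add,
      Finset.sum_add_distrib, mul_ite, mul_zero, Finset.sum_ite_eq, Finset.mem_univ,
      if_true] at h
    rw [← h, ← Finset.sum_mul]
    ring
  have hS : ((1 - c + Fintype.card ι * c : ℝ) : ℂ) * S = 0 := by
    have h := Finset.sum_eq_zero (s := Finset.univ) fun j _ => hrow j
    rw [Finset.sum_add_distrib, ← Finset.mul_sum, Finset.sum_const, Finset.card_univ,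
      nsmul_eq_mul] at h
    push_cast
    linear_combination h
  have hS0 : S = 0 := by
    refine (mul_eq_zero.mp hS).resolve_left ?_
    have : 0 ≤ (Fintype.card ι : ℝ) * c := by positivity
    exact_mod_cast (by linarith : 1 - c + Fintype.card ι * c ≠ 0)
  intro j
  have h := hrow j
  rw [hS0, mul_zero, add_zero] at h
  refine (mul_eq_zero.mp h).resolve_left ?_
  exact_mod_cast (sub_ne_zero.mpr hc1.ne' : 1 - c ≠ 0)

end

theorem range_gammaOne_le {d N : ℕ} (ψ : Fin N → Fin d → ℂ) :
    LinearMap.range (gammaOne ψ).mulVecLin ≤ Submodule.span ℂ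
      ((fun p : Fin N × Fin N => kroneckerVec (ψ p.1) (ψ p.2)) '' Set.range fun k => (k, k)) := by
  rw [← Set.range_comp, ← Set.image_univ, ← Finset.coe_univ, gammaOne]
  refine (range_mulVecLin_smul_le _ _).trans ?_
  simp only [projOf, vecMulVec_kronecker_vecMulVec]
  exact range_mulVecLin_sum_vecMulVec_le _ _ _

theorem range_gammaTwo_le {d N : ℕ} (ψ : Fin N → Fin d → ℂ) :
    LinearMap.range (gammaTwo ψ).mulVecLin ≤ Submodule.span ℂ
      ((fun p : Fin N × Fin N => kroneckerVec (ψ p.1) (ψ p.2)) '' {p | p.1 ≠ p.2}) := by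
  rw [← Finset.coe_filter_univ, gammaTwo]
  refine (range_mulVecLin_smul_le _ _).trans ?_
  simp only [projOf, vecMulVec_kronecker_vecMulVec]
  exact range_mulVecLin_sum_vecMulVec_le _ _ _

theorem supports_disjoint_general (d N : ℕ) (ψ : Fin N → Fin d → ℂ)
    (hnorm : ∀ k, star (ψ k) ⬝ᵥ ψ k = 1)
    (c : ℝ) (hc0 : 0 < c) (hc1 : c < 1)
    (hoverlap : ∀ i j, i ≠ j → star (ψ i) ⬝ᵥ ψ j = (c : ℂ)) :
    LinearMap.range (gammaOne ψ).mulVecLin ⊓ LinearMap.range (gammaTwo ψ).mulVecLin = ⊥ := by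
  have hψ := linearIndependent_of_equiangular hc0.le hc1 hnorm hoverlap
  have hdisj := (hψ.kroneckerVec hψ).disjoint_span_image
    (s := Set.range fun k => (k, k)) (t := {p | p.1 ≠ p.2})
    (Set.disjoint_left.mpr fun _ ⟨k, hk⟩ hne => hne (hk ▸ rfl))
  exact (hdisj.mono (range_gammaOne_le ψ) (range_gammaTwo_le ψ)).eq_bot

/-- For the state-comparison operators `γ1` and `γ2`, the supports intersect trivially:
`range γ1 ∩ range γ2 = {0}`. -/
theorem supports_disjoint (d N : ℕ) (hN : 2 ≤ N) (ψ : Fin N → Fin d → ℂ)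
    (hnorm : ∀ k, star (ψ k) ⬝ᵥ ψ k = 1)
    (c : ℝ) (hc0 : 0 < c) (hc1 : c < 1)
    (hoverlap : ∀ i j, i ≠ j → star (ψ i) ⬝ᵥ ψ j = (c : ℂ)) :
    LinearMap.range (gammaOne ψ).mulVecLin ⊓ LinearMap.range (gammaTwo ψ).mulVecLin = ⊥ :=
  supports_disjoint_general d N ψ hnorm c hc0 hc1 hoverlap
end

section
/- Let N ≥ 2 and let ψ_1, …, ψ_N be unit vectors in ℂ^d with ⟨ψ_i, ψ_j⟩ = c for all i ≠ j, where c is real with 0 < c < 1. With γ1 = N⁻² Σ_k P_k ⊗ P_k and γ2 = N⁻² Σ_{k≠l} P_k ⊗ P_l as above, the commutator [γ1, γ1 γ2 γ1] vanishes: γ1 (γ1 γ2 γ1) = (γ1 γ2 γ1) γ1. -/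
open Matrix Kronecker

/-!
Let `A` be the `d × N` matrix with columns `ψ k` and `U` its Khatri–Rao square, the matrix with
columns `ψ k ⊗ ψ k`. Then `N² γ1 = X := U Uᴴ` and `N² γ2 = Y := (A Aᴴ) ⊗ (A Aᴴ) - U Uᴴ`, and since
`X (X Y X) = U (Uᴴ U) (Uᴴ Y U) Uᴴ`, it suffices that `Uᴴ U` and `Uᴴ Y U` commute. With the Gram matrix
`G = Aᴴ A` these are `G ⊙ G` and `G² ⊙ G² - (G ⊙ G)²`. As `G = (1 - c) I + c J` with `J` the all-ones
matrix `of 1`, all of them lie in the span of `I` and `J`, which is closed under products and Hadamard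
products and is commutative.
-/

theorem Finset.sum_filter_fst_ne_snd {M ι : Type*} [AddCommGroup M] [Fintype ι] [DecidableEq ι]
    (F : ι → ι → M) :
    ∑ q ∈ univ.filter (fun q : ι × ι => q.1 ≠ q.2), F q.1 q.2 = ∑ i, ∑ j, F i j - ∑ i, F i i := by
  rw [eq_sub_iff_add_eq, ← Fintype.sum_prod_type',
    ← sum_filter_add_sum_filter_not univ (fun q : ι × ι => q.1 ≠ q.2)]
  congr 1
  simp [sum_filter, Fintype.sum_prod_type]

namespace Matrix

variable {R ι m n p : Type*}

section SpanOneOfOne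

variable [CommSemiring R] [DecidableEq n]

theorem hadamard_mem_span_one_of_one {M M' : Matrix n n R}
    (hM : M ∈ Submodule.span R {1, of 1}) (hM' : M' ∈ Submodule.span R {1, of 1}) :
    M ⊙ M' ∈ Submodule.span R {1, of 1} := by
  obtain ⟨a, b, rfl⟩ := Submodule.mem_span_pair.mp hM
  obtain ⟨a', b', rfl⟩ := Submodule.mem_span_pair.mp hM'
  refine Submodule.mem_span_pair.mpr ⟨a * a' + a * b' + b * a', b * b', ?_⟩
  ext i j
  rcases eq_or_ne i j with rfl | hij
  · simp only [smul_of, add_apply, smul_apply, one_apply_eq, smul_eq_mul, mul_one, of_apply,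
      Pi.smul_apply, Pi.one_apply, hadamard_apply]
    ring
  · simp [hij]

variable [Fintype n]

omit [DecidableEq n] in
theorem of_one_mul_of_one : (of 1 : Matrix n n R) * of 1 = (Fintype.card n : R) • of 1 := by
  ext i j
  simp [mul_apply]

theorem mul_mem_span_one_of_one {M M' : Matrix n n R}
    (hM : M ∈ Submodule.span R {1, of 1}) (hM' : M' ∈ Submodule.span R {1, of 1}) :
    M * M' ∈ Submodule.span R {1, of 1} := by
  obtain ⟨a, b, rfl⟩ := Submodule.mem_span_pair.mp hM
  obtain ⟨a', b', rfl⟩ := Submodule.mem_span_pair.mp hM'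
  refine Submodule.mem_span_pair.mpr ⟨a * a', a * b' + b * a' + b * b' * Fintype.card n, ?_⟩
  simp only [add_mul, mul_add, smul_mul_smul_comm, Matrix.one_mul, Matrix.mul_one,
    of_one_mul_of_one, smul_smul]
  module

theorem commute_of_mem_span_one_of_one {M M' : Matrix n n R}
    (hM : M ∈ Submodule.span R {1, of 1}) (hM' : M' ∈ Submodule.span R {1, of 1}) :
    Commute M M' := by
  obtain ⟨a, b, rfl⟩ := Submodule.mem_span_pair.mp hM
  obtain ⟨a', b', rfl⟩ := Submodule.mem_span_pair.mp hM'
  rw [commute_iff_eq]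
  simp only [add_mul, mul_add, smul_mul_smul_comm, Matrix.one_mul, Matrix.mul_one,
    of_one_mul_of_one, smul_smul]
  module

end SpanOneOfOne

def khatriRao [Mul R] (A : Matrix m ι R) (B : Matrix p ι R) : Matrix (m × p) ι R :=
  of fun i k => A i.1 k * B i.2 k

section KhatriRao

variable [CommSemiring R] [StarRing R]

theorem conjTranspose_khatriRao_mul_kronecker_mul_khatriRao [Fintype m] [Fintype p]
    (A C : Matrix m ι R) (B D : Matrix p ι R) (X : Matrix m m R) (Y : Matrix p p R) :
    (khatriRao A B)ᴴ * (X ⊗ₖ Y) * khatriRao C D = (Aᴴ * X * C) ⊙ (Bᴴ * Y * D) := by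
  have sum_prod_mul {f : m → R} {g : p → R} :
      ∑ q : m × p, f q.1 * g q.2 = (∑ i, f i) * ∑ j, g j := by
    rw [Fintype.sum_mul_sum, Fintype.sum_prod_type]
  have row (a : ι) (q : m × p) :
      ((khatriRao A B)ᴴ * (X ⊗ₖ Y)) a q = (Aᴴ * X) a q.1 * (Bᴴ * Y) a q.2 := by
    simp only [mul_apply, conjTranspose_apply, khatriRao, of_apply, kroneckerMap_apply, star_mul']
    rw [← sum_prod_mul]
    exact Finset.sum_congr rfl fun _ _ => by ring
  ext a b
  rw [hadamard_apply, mul_apply, mul_apply (M := Aᴴ * X), mul_apply (M := Bᴴ * Y), ← sum_prod_mul]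
  refine Finset.sum_congr rfl fun q _ => ?_
  rw [row]
  simp only [khatriRao, of_apply]
  ring

theorem conjTranspose_khatriRao_mul_khatriRao [Fintype m] [Fintype p] [DecidableEq m]
    [DecidableEq p] (A C : Matrix m ι R) (B D : Matrix p ι R) :
    (khatriRao A B)ᴴ * khatriRao C D = (Aᴴ * C) ⊙ (Bᴴ * D) := by
  simpa using conjTranspose_khatriRao_mul_kronecker_mul_khatriRao A C B D 1 1

theorem khatriRao_mul_conjTranspose_khatriRao [Fintype ι]
    (A C : Matrix m ι R) (B D : Matrix p ι R) :
    khatriRao A B * (khatriRao C D)ᴴ =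
      ∑ k, vecMulVec (Aᵀ k) (star (Cᵀ k)) ⊗ₖ vecMulVec (Bᵀ k) (star (Dᵀ k)) := by
  ext ⟨i, j⟩ ⟨i', j'⟩
  simp only [mul_apply, conjTranspose_apply, khatriRao, of_apply, kroneckerMap_apply, sum_apply,
    vecMulVec_apply, transpose_apply, Pi.star_apply, star_mul']
  exact Finset.sum_congr rfl fun k _ => by ring

theorem mul_conjTranspose_eq_sum_vecMulVec [Fintype ι] (A C : Matrix m ι R) :
    A * Cᴴ = ∑ k, vecMulVec (Aᵀ k) (star (Cᵀ k)) := by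
  ext i j
  simp [mul_apply, sum_apply, vecMulVec_apply]

end KhatriRao

theorem sum_kronecker_sum [CommSemiring R] [Fintype ι] (f : ι → Matrix m m R)
    (g : ι → Matrix p p R) : (∑ i, f i) ⊗ₖ (∑ j, g j) = ∑ i, ∑ j, f i ⊗ₖ g j := by
  ext a b
  simp [kroneckerMap_apply, sum_apply, Fintype.sum_mul_sum]

theorem commute_mul_mul_mul_of_commute [Semiring R] [Fintype ι] [Fintype m]
    {L : Matrix m ι R} {L' : Matrix ι m R} (Y : Matrix m m R)
    (h : Commute (L' * L) (L' * Y * L)) : Commute (L * L') (L * L' * Y * (L * L')) :=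
  calc L * L' * (L * L' * Y * (L * L')) = L * ((L' * L) * (L' * Y * L)) * L' := by
        simp only [Matrix.mul_assoc]
    _ = L * ((L' * Y * L) * (L' * L)) * L' := by rw [h.eq]
    _ = L * L' * Y * (L * L') * (L * L') := by simp only [Matrix.mul_assoc]

theorem commute_khatriRao_mul_conjTranspose_of_gram_mem_span [CommRing R] [StarRing R]
    [Fintype ι] [DecidableEq ι] [Fintype n] [DecidableEq n] (A : Matrix n ι R)
    (hG : Aᴴ * A ∈ Submodule.span R {1, of 1}) :
    let U := khatriRao A A
    Commute (U * Uᴴ) (U * Uᴴ * ((A * Aᴴ) ⊗ₖ (A * Aᴴ) - U * Uᴴ) * (U * Uᴴ)) := by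
  intro U
  apply commute_mul_mul_mul_of_commute
  have hH : Uᴴ * U = (Aᴴ * A) ⊙ (Aᴴ * A) := conjTranspose_khatriRao_mul_khatriRao A A A A
  have hK : Uᴴ * ((A * Aᴴ) ⊗ₖ (A * Aᴴ)) * U = (Aᴴ * A * (Aᴴ * A)) ⊙ (Aᴴ * A * (Aᴴ * A)) := by
    rw [conjTranspose_khatriRao_mul_kronecker_mul_khatriRao]
    simp only [Matrix.mul_assoc]
  have hGG := mul_mem_span_one_of_one hG hG
  have hHH : Uᴴ * (U * Uᴴ) * U = Uᴴ * U * (Uᴴ * U) := by simp only [Matrix.mul_assoc]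
  rw [Matrix.mul_sub, Matrix.sub_mul, hK, hHH, hH]
  exact (commute_of_mem_span_one_of_one (hadamard_mem_span_one_of_one hG hG)
    (hadamard_mem_span_one_of_one hGG hGG)).sub_right ((Commute.refl _).mul_right (Commute.refl _))

end Matrix

section States

variable {d N : ℕ} (ψ : Fin N → Fin d → ℂ)

theorem gammaOne_eq :
    gammaOne ψ = ((N : ℂ) ^ 2)⁻¹ •
      (khatriRao (of ψ)ᵀ (of ψ)ᵀ * (khatriRao (of ψ)ᵀ (of ψ)ᵀ)ᴴ) := by
  rw [gammaOne, khatriRao_mul_conjTranspose_khatriRao]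
  rfl

theorem gammaTwo_eq :
    gammaTwo ψ = ((N : ℂ) ^ 2)⁻¹ • (((of ψ)ᵀ * (of ψ)ᵀᴴ) ⊗ₖ ((of ψ)ᵀ * (of ψ)ᵀᴴ) -
      khatriRao (of ψ)ᵀ (of ψ)ᵀ * (khatriRao (of ψ)ᵀ (of ψ)ᵀ)ᴴ) := by
  rw [gammaTwo, Finset.sum_filter_fst_ne_snd (fun k l => projOf ψ k ⊗ₖ projOf ψ l),
    ← sum_kronecker_sum, khatriRao_mul_conjTranspose_khatriRao, mul_conjTranspose_eq_sum_vecMulVec]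
  rfl

theorem gram_eq_of_equiangular (hnorm : ∀ k, star (ψ k) ⬝ᵥ ψ k = 1) (c : ℂ)
    (hoverlap : ∀ i j, i ≠ j → star (ψ i) ⬝ᵥ ψ j = c) :
    (of ψ)ᵀᴴ * (of ψ)ᵀ = (1 - c) • 1 + c • of 1 := by
  ext i j
  change star (ψ i) ⬝ᵥ ψ j = _
  rcases eq_or_ne i j with rfl | hij
  · simp [hnorm]
  · simp [hoverlap i j hij, hij]

end States

theorem commutator_gamma1_g1g2g1_general (d N : ℕ) (ψ : Fin N → Fin d → ℂ)
    (hnorm : ∀ k, star (ψ k) ⬝ᵥ ψ k = 1)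
    (c : ℝ)
    (hoverlap : ∀ i j, i ≠ j → star (ψ i) ⬝ᵥ ψ j = (c : ℂ)) :
    gammaOne ψ * (gammaOne ψ * gammaTwo ψ * gammaOne ψ) =
      (gammaOne ψ * gammaTwo ψ * gammaOne ψ) * gammaOne ψ := by
  have hG : (of ψ)ᵀᴴ * (of ψ)ᵀ ∈ Submodule.span ℂ {1, of 1} :=
    Submodule.mem_span_pair.mpr ⟨_, _, (gram_eq_of_equiangular ψ hnorm c hoverlap).symm⟩
  have h := commute_khatriRao_mul_conjTranspose_of_gram_mem_span _ hG
  rw [gammaOne_eq, gammaTwo_eq]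
  change Commute _ _
  rw [smul_mul_smul_comm, smul_mul_smul_comm]
  exact (h.smul_left _).smul_right _

/-- For the state-comparison operators, the commutator `[γ1, γ1 γ2 γ1]` vanishes. -/
theorem commutator_gamma1_g1g2g1 (d N : ℕ) (hN : 2 ≤ N) (ψ : Fin N → Fin d → ℂ)
    (hnorm : ∀ k, star (ψ k) ⬝ᵥ ψ k = 1)
    (c : ℝ) (hc0 : 0 < c) (hc1 : c < 1)
    (hoverlap : ∀ i j, i ≠ j → star (ψ i) ⬝ᵥ ψ j = (c : ℂ)) :
    gammaOne ψ * (gammaOne ψ * gammaTwo ψ * gammaOne ψ) =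
      (gammaOne ψ * gammaTwo ψ * gammaOne ψ) * gammaOne ψ :=
  commutator_gamma1_g1g2g1_general d N ψ hnorm c hoverlap
end
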